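/- arXiv:1912.07470 — 3 statements merged into one kernel-verified Lean document; each statement's English description precedes it below -/
import Mathlib

section
/- Let r > 0 and 0 < ε ≤ 1, and let S = { x ∈ ℝ^d : r(1−ε) ≤ |x| ≤ r(1+ε) } be the spherical shell about the origin. If x, y, z ∈ S satisfy y = (x+z)/2, then |x − z| ≤ 4·√ε·r. -/
/-!
By the parallelogram law, `‖x - z‖² = 2‖x‖² + 2‖z‖² - ‖x + z‖²`. On the shell the first two
terms are at most `r²(1 + ε)²` each, while `‖x + z‖ = 2‖y‖ ≥ 2r(1 - ε)`; hence
`‖x - z‖² ≤ 4r²((1 + ε)² - (1 - ε)²) = 16εr²`.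
-/

lemma norm_sub_sq_le_of_le_norm_add {E : Type*} [NormedAddCommGroup E] [InnerProductSpace ℝ E]
    {x z : E} {a b : ℝ} (ha : 0 ≤ a) (hx : ‖x‖ ≤ b) (hz : ‖z‖ ≤ b) (hxz : 2 * a ≤ ‖x + z‖) :
    ‖x - z‖ ^ 2 ≤ 4 * (b ^ 2 - a ^ 2) := by
  have hpar := parallelogram_law_with_norm ℝ x z
  have hx2 : ‖x‖ ^ 2 ≤ b ^ 2 := pow_le_pow_left₀ (norm_nonneg x) hx 2
  have hz2 : ‖z‖ ^ 2 ≤ b ^ 2 := pow_le_pow_left₀ (norm_nonneg z) hz 2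
  have hxz2 : (2 * a) ^ 2 ≤ ‖x + z‖ ^ 2 := pow_le_pow_left₀ (by positivity) hxz 2
  nlinarith

/-- In the spherical shell `S = {x : r(1-ε) ≤ |x| ≤ r(1+ε)}`,
if `x, y, z ∈ S` and `y = (x+z)/2`, then `|x - z| ≤ 4 √ε r`. -/
theorem stmt_5 (d : ℕ) (r ε : ℝ) (hr : 0 < r) (hε0 : 0 < ε) (hε1 : ε ≤ 1)
    (x y z : EuclideanSpace ℝ (Fin d))
    (hx : r * (1 - ε) ≤ ‖x‖ ∧ ‖x‖ ≤ r * (1 + ε))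
    (hy : r * (1 - ε) ≤ ‖y‖ ∧ ‖y‖ ≤ r * (1 + ε))
    (hz : r * (1 - ε) ≤ ‖z‖ ∧ ‖z‖ ≤ r * (1 + ε))
    (hmid : y = (2 : ℝ)⁻¹ • (x + z)) :
    ‖x - z‖ ≤ 4 * Real.sqrt ε * r := by
  have hnorm_add : ‖x + z‖ = 2 * ‖y‖ := by
    rw [hmid, norm_smul]
    norm_num
    ring
  have hsq : ‖x - z‖ ^ 2 ≤ (4 * Real.sqrt ε * r) ^ 2 := by
    have h := norm_sub_sq_le_of_le_norm_add (mul_nonneg hr.le (sub_nonneg.2 hε1)) hx.2 hz.2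
      (by rw [hnorm_add]; linarith [hy.1])
    calc ‖x - z‖ ^ 2 ≤ 4 * ((r * (1 + ε)) ^ 2 - (r * (1 - ε)) ^ 2) := h
      _ = 16 * ε * r ^ 2 := by ring
      _ = (4 * Real.sqrt ε * r) ^ 2 := by rw [mul_pow, mul_pow, Real.sq_sqrt hε0.le]; ring
  exact (pow_le_pow_iff_left₀ (norm_nonneg _) (by positivity) two_ne_zero).1 hsq
end

section
/- Let C ≥ 2 and d ≥ 1, and let f be the coloring of {0,...,C-1}^d defined by f(x) = (a_1,...,a_d, b_1,...,b_d) with a_i = x(i) mod 2 and b_i = ±k according to the dyadic-scale rule (b_i = k if x(i) ≤ C/2 and 2^{k-1}−1 ≤ x(i) < 2^k−1; b_i = −k if x(i) > C/2 and 2^{k-1}−1 ≤ C−1−x(i) < 2^k−1). Then for all x, y with f(x) = f(y), the tuple 2x − y has all coordinates in the range {0,...,C-1}. -/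
/-!
Within one coordinate, equal labels put `x` and `y` on the same side of `C/2` and in the same
band `[2^k, 2^(k+1))` for the distance-plus-one to the nearer end of `{0, …, C-1}`. Two numbers
`m, n ≥ 1` in one such band satisfy `n < 2m`; on the lower side this gives `2x - y ≥ 0`, on the
upper side (applied to `C - x`, `C - y`) it gives `2x - y ≤ C - 1`. The remaining inequality
comes from the side of `C/2` that `x` lies on (and, when `y = 0`, from `x = 0` in the same band).
-/

/-- The dyadic-band label of a coordinate value `m ∈ {0,…,C-1}`:
`b = k` if `m ≤ C/2` and `2^(k-1) - 1 ≤ m < 2^k - 1`, and `b = -k` if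
`m > C/2` and `2^(k-1) - 1 ≤ C - 1 - m < 2^k - 1`. -/
def apBand (C m : ℕ) : ℤ :=
  if 2 * m ≤ C then (Nat.log 2 (m + 1) : ℤ) + 1
  else -((Nat.log 2 (C - m) : ℤ) + 1)

/-- The auxiliary coloring `f(x) = (a_1,…,a_d, b_1,…,b_d)` with
`a_i = x(i) mod 2` and `b_i` the dyadic-band label of `x(i)`. -/
def apColoring (C : ℕ) {d : ℕ} (x : Fin d → ℕ) : (Fin d → ℕ) × (Fin d → ℤ) :=
  (fun i => x i % 2, fun i => apBand C (x i))

theorem Nat.lt_mul_of_log_eq {b m n : ℕ} (hb : 1 < b) (hm : m ≠ 0)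
    (h : Nat.log b m = Nat.log b n) : n < b * m :=
  calc n < b ^ (Nat.log b n + 1) := Nat.lt_pow_succ_log_self hb n
    _ = b * b ^ Nat.log b m := by rw [h, pow_succ']
    _ ≤ b * m := Nat.mul_le_mul_left b (Nat.pow_log_le_self b hm)

theorem apBand_of_two_mul_le {C m : ℕ} (h : 2 * m ≤ C) :
    apBand C m = (Nat.log 2 (m + 1) : ℤ) + 1 :=
  if_pos h

theorem apBand_of_lt_two_mul {C m : ℕ} (h : C < 2 * m) :
    apBand C m = -((Nat.log 2 (C - m) : ℤ) + 1) :=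
  if_neg (Nat.not_le.mpr h)

theorem two_mul_sub_mem_of_apBand_eq {C a b : ℕ} (ha : a < C) (hb : b < C)
    (hab : apBand C a = apBand C b) :
    0 ≤ 2 * (a : ℤ) - b ∧ 2 * (a : ℤ) - b ≤ C - 1 := by
  rcases le_or_gt (2 * a) C with ha2 | ha2 <;> rcases le_or_gt (2 * b) C with hb2 | hb2
  · rw [apBand_of_two_mul_le ha2, apBand_of_two_mul_le hb2] at hab
    have hlog : Nat.log 2 (a + 1) = Nat.log 2 (b + 1) := by exact_mod_cast by linarith
    have hb_lt := Nat.lt_mul_of_log_eq one_lt_two a.succ_ne_zero hlog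
    have ha_lt := Nat.lt_mul_of_log_eq one_lt_two b.succ_ne_zero hlog.symm
    omega
  · rw [apBand_of_two_mul_le ha2, apBand_of_lt_two_mul hb2] at hab
    omega
  · rw [apBand_of_lt_two_mul ha2, apBand_of_two_mul_le hb2] at hab
    omega
  · rw [apBand_of_lt_two_mul ha2, apBand_of_lt_two_mul hb2] at hab
    have hlog : Nat.log 2 (C - a) = Nat.log 2 (C - b) := by exact_mod_cast by linarith
    have hb_lt := Nat.lt_mul_of_log_eq one_lt_two (Nat.sub_ne_zero_of_lt ha) hlog
    omega

theorem stmt_8_general (C d : ℕ)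
    (x y : Fin d → ℕ) (hx : ∀ i, x i < C) (hy : ∀ i, y i < C)
    (hf : apColoring C x = apColoring C y) :
    ∀ i, 0 ≤ 2 * (x i : ℤ) - (y i : ℤ) ∧ 2 * (x i : ℤ) - (y i : ℤ) ≤ (C : ℤ) - 1 := fun i =>
  two_mul_sub_mem_of_apBand_eq (hx i) (hy i) (congrFun (congrArg Prod.snd hf) i)

/-- If `f(x) = f(y)` for `x, y ∈ {0,…,C-1}^d`, then the
tuple `2x - y` has all coordinates in `{0,…,C-1}`. -/
theorem stmt_8 (C d : ℕ) (hC : 2 ≤ C) (hd : 1 ≤ d)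
    (x y : Fin d → ℕ) (hx : ∀ i, x i < C) (hy : ∀ i, y i < C)
    (hf : apColoring C x = apColoring C y) :
    ∀ i, 0 ≤ 2 * (x i : ℤ) - (y i : ℤ) ∧ 2 * (x i : ℤ) - (y i : ℤ) ≤ (C : ℤ) - 1 :=
  stmt_8_general C d x y hx hy hf
end

section
/- Let k ≥ 3, r > 0, and 0 < ε ≤ 1/k², and let S = {x ∈ ℝ^d : r(1−ε) ≤ |x| ≤ r(1+ε)}. If x₁, x₂, ..., x_k ∈ S form a k-term arithmetic progression (i.e., x_{i+1} − x_i = t for all i and some fixed vector t ≠ 0), then |x₁ − x_k| ≤ 10·√ε·r. -/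
/-!
Put `m = ⌊(k-1)/2⌋ ≥ 1`. The terms `x₀ = c - s`, `x_m = c`, `x_{2m} = c + s` with `s = m t` form a
3-term progression, and the parallelogram law `‖c + s‖² + ‖c - s‖² = 2‖c‖² + 2‖s‖²` gives
`‖s‖² ≤ r²((1+ε)² - (1-ε)²) = 4εr²`. Hence `m‖t‖ ≤ 2√ε r`, and `k - 1 ≤ 3m` gives
`‖x₀ - x_{k-1}‖ = (k-1)‖t‖ ≤ 6√ε r`.
-/

open Real

theorem eq_add_nsmul_of_forall_succ_eq_add {M : Type*} [AddMonoid M] {k : ℕ} {x : ℕ → M} {t : M}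
    (hAP : ∀ i, i + 1 < k → x (i + 1) = x i + t) : ∀ i < k, x i = x 0 + i • t := by
  intro i hi
  induction i with
  | zero => simp
  | succ n ih => rw [hAP n hi, ih (by omega), succ_nsmul, add_assoc]

section InnerProductSpace

variable {E : Type*} [NormedAddCommGroup E] [InnerProductSpace ℝ E]

theorem sq_norm_le_sq_sub_sq_of_norm_add_sub_le {c s : E} {L U : ℝ} (hL : 0 ≤ L)
    (hc : L ≤ ‖c‖) (hadd : ‖c + s‖ ≤ U) (hsub : ‖c - s‖ ≤ U) :
    ‖s‖ ^ 2 ≤ U ^ 2 - L ^ 2 := by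
  have hpar := parallelogram_law_with_norm ℝ c s
  have hc2 : L ^ 2 ≤ ‖c‖ ^ 2 := pow_le_pow_left₀ hL hc 2
  have hadd2 : ‖c + s‖ ^ 2 ≤ U ^ 2 := pow_le_pow_left₀ (norm_nonneg _) hadd 2
  have hsub2 : ‖c - s‖ ^ 2 ≤ U ^ 2 := pow_le_pow_left₀ (norm_nonneg _) hsub 2
  linarith

theorem norm_le_two_mul_sqrt_mul_of_shell {c s : E} {r ε : ℝ} (hr : 0 ≤ r) (hε0 : 0 ≤ ε)
    (hε1 : ε ≤ 1) (hc : r * (1 - ε) ≤ ‖c‖) (hadd : ‖c + s‖ ≤ r * (1 + ε))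
    (hsub : ‖c - s‖ ≤ r * (1 + ε)) :
    ‖s‖ ≤ 2 * √ε * r := by
  have hsq := sq_norm_le_sq_sub_sq_of_norm_add_sub_le
    (mul_nonneg hr (sub_nonneg.mpr hε1)) hc hadd hsub
  have hbound : (r * (1 + ε)) ^ 2 - (r * (1 - ε)) ^ 2 = (2 * √ε * r) ^ 2 := by
    rw [mul_pow (2 * √ε), mul_pow 2, sq_sqrt hε0]
    ring
  exact le_of_pow_le_pow_left₀ two_ne_zero (by positivity) (hbound ▸ hsq)

end InnerProductSpace

theorem stmt_19_general (d k : ℕ) (hk : 3 ≤ k) (r ε : ℝ) (hr : 0 < r)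
    (hε0 : 0 < ε) (hε1 : ε ≤ 1 / (k : ℝ) ^ 2)
    (x : ℕ → EuclideanSpace ℝ (Fin d)) (t : EuclideanSpace ℝ (Fin d))
    (hAP : ∀ i : ℕ, i + 1 < k → x (i + 1) = x i + t)
    (hshell : ∀ i : ℕ, i < k → r * (1 - ε) ≤ ‖x i‖ ∧ ‖x i‖ ≤ r * (1 + ε)) :
    ‖x 0 - x (k - 1)‖ ≤ 10 * Real.sqrt ε * r := by
  have hx := eq_add_nsmul_of_forall_succ_eq_add hAP
  set m := (k - 1) / 2
  have hε1' : ε ≤ 1 :=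
    hε1.trans <| div_le_one_of_le₀ (one_le_pow₀ (by norm_cast; omega)) (by positivity)
  have hlast : x (2 * m) = x m + m • t := by
    rw [hx (2 * m) (by omega), hx m (by omega), two_mul, add_nsmul, add_assoc]
  have hfirst : x 0 = x m - m • t := by rw [hx m (by omega), add_sub_cancel_right]
  have hstep : ‖m • t‖ ≤ 2 * √ε * r :=
    norm_le_two_mul_sqrt_mul_of_shell hr.le hε0.le hε1' (hshell m (by omega)).1
      (hlast ▸ (hshell _ (by omega)).2) (hfirst ▸ (hshell 0 (by omega)).2)
  rw [RCLike.norm_nsmul ℝ, nsmul_eq_mul] at hstep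
  have hdist : ‖x 0 - x (k - 1)‖ = (k - 1 : ℕ) * ‖t‖ := by
    rw [hx (k - 1) (by omega), sub_add_cancel_left, norm_neg, RCLike.norm_nsmul ℝ, nsmul_eq_mul]
  have hk3m : ((k - 1 : ℕ) : ℝ) ≤ 3 * m := by norm_cast; omega
  calc ‖x 0 - x (k - 1)‖ = (k - 1 : ℕ) * ‖t‖ := hdist
    _ ≤ 3 * (m * ‖t‖) := by rw [← mul_assoc]; gcongr
    _ ≤ 3 * (2 * √ε * r) := by gcongr
    _ ≤ 10 * √ε * r := by nlinarith [sqrt_nonneg ε]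

/-- If `x₁,…,x_k` (`k ≥ 3`) is a `k`-term arithmetic progression
with nonzero common difference lying in the shell `r(1-ε) ≤ |·| ≤ r(1+ε)` with
`0 < ε ≤ 1/k²`, then `|x₁ - x_k| ≤ 10 √ε r`. -/
theorem stmt_19 (d k : ℕ) (hk : 3 ≤ k) (r ε : ℝ) (hr : 0 < r)
    (hε0 : 0 < ε) (hε1 : ε ≤ 1 / (k : ℝ) ^ 2)
    (x : ℕ → EuclideanSpace ℝ (Fin d)) (t : EuclideanSpace ℝ (Fin d)) (ht : t ≠ 0)
    (hAP : ∀ i : ℕ, i + 1 < k → x (i + 1) = x i + t)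
    (hshell : ∀ i : ℕ, i < k → r * (1 - ε) ≤ ‖x i‖ ∧ ‖x i‖ ≤ r * (1 + ε)) :
    ‖x 0 - x (k - 1)‖ ≤ 10 * Real.sqrt ε * r :=
  stmt_19_general d k hk r ε hr hε0 hε1 x t hAP hshell
end
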